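/- arXiv:1007.3401 — 5 statements merged into one kernel-verified Lean document; each statement's English description precedes it below -/
import Mathlib

section
/- Let 0 < β ≤ 3 and ν > 0. For every initial condition (x_n)_{n≥1} with x_n ≥ 0 for all n ≥ 1 and Σ_{n=1}^∞ x_n² < ∞, the viscous dyadic model has at most one weak solution on [0,T] with initial condition (x_n)_{n≥1}, for every T > 0 (i.e. any two weak solutions with this initial condition coincide on [0,T]). -/
/-!
Solutions with nonnegative data stay nonnegative, so the energy inequality holds: it bounds
every component by `E = ‖x‖_H` and makes the dissipations `∫₀ᵗ λ_N² X_N²` summable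
in `N`. For the difference `Z = X - Y`, the weighted distance
`F_N = ∑_{m ≤ N} 2^{-m} Z_m²` has a derivative made of nonpositive dissipative terms
plus the boundary flux `-2^{-N} λ_N^β (X_N² - Y_N²) Z_{N+1}`: with the weight `2^{-m}`
the interaction terms between neighbouring shells telescope, as `2 · 2^{-m} = 2^{-(m-1)}`.
Since `0 ≤ X_{N+1}, Y_{N+1} ≤ E`, the flux is at most
`E 2^{-N} λ_N^β (X_N² + Y_N²) ≤ E λ_N² (X_N² + Y_N²)`, the last step being
`2^{N(β-1)} ≤ 2^{2N}`, i.e. `β ≤ 3`. Hence `2^{-n} Z_n(t)² ≤ F_N(t)` is bounded by `E`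
times the `N`-th dissipation of `X` and `Y`, which tends to `0`.
-/

/-- The dyadic frequencies: `λ_0 = 0`, `λ_n = 2^n` for `n ≥ 1`. -/
noncomputable def lam (n : ℕ) : ℝ := if n = 0 then 0 else 2 ^ n

/-- `X` is a weak solution of the viscous dyadic model with parameter `β` and
viscosity `ν` on the interval `I`. -/
def IsViscousSolution (β ν : ℝ) (I : Set ℝ) (X : ℕ → ℝ → ℝ) : Prop :=
  ∀ n, 1 ≤ n → ∀ t ∈ I, HasDerivWithinAt (X n)
    (-ν * lam n ^ 2 * X n t + lam (n - 1) ^ β * (X (n - 1) t) ^ 2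
      - lam n ^ β * X n t * X (n + 1) t) I t

open Set Finset Filter Topology

section Calculus

variable {a b t : ℝ} {f f' c φ : ℝ → ℝ}

theorem sub_le_integral_of_hasDerivWithinAt_Icc
    (hf : ∀ s ∈ Icc a b, HasDerivWithinAt f (f' s) (Icc a b) s)
    (hφ : ContinuousOn φ (Icc a b)) (hle : ∀ s ∈ Icc a b, f' s ≤ φ s)
    (ht : t ∈ Icc a b) :
    f t - f a ≤ ∫ s in a..t, φ s := by
  have hsub : Icc a t ⊆ Icc a b := Icc_subset_Icc le_rfl ht.2
  refine intervalIntegral.sub_le_integral_of_hasDeriv_right_of_le ht.1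
    (fun s hs => (hf s (hsub hs)).continuousWithinAt.mono hsub)
    (fun s hs => (hf s (hsub (Ioo_subset_Icc_self hs))).mono_of_mem_nhdsWithin
      (Icc_mem_nhdsGT_of_mem ⟨hs.1.le, hs.2.trans_le ht.2⟩))
    ((hφ.mono hsub).integrableOn_Icc) (fun s hs => hle s (hsub (Ioo_subset_Icc_self hs)))

theorem nonneg_of_hasDerivWithinAt_Icc
    (hf : ∀ s ∈ Icc a b, HasDerivWithinAt f (f' s) (Icc a b) s)
    (hc : ContinuousOn c (Icc a b)) (hle : ∀ s ∈ Icc a b, c s * f s ≤ f' s)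
    (ha : 0 ≤ f a) (ht : t ∈ Icc a b) : 0 ≤ f t := by
  set A : ℝ → ℝ := fun u => ∫ s in a..u, c s
  have hA : ∀ u ∈ Icc a b, HasDerivWithinAt A (c u) (Icc a b) u := fun u hu => by
    have : Fact (u ∈ Icc a b) := ⟨hu⟩
    exact intervalIntegral.integral_hasDerivWithinAt_right
      ((hc.mono (Icc_subset_Icc le_rfl hu.2)).intervalIntegrable_of_Icc hu.1)
      (hc.stronglyMeasurableAtFilter_nhdsWithin measurableSet_Icc u) (hc u hu)
  have hg : ∀ u ∈ Icc a b, HasDerivWithinAt (fun u => f u * Real.exp (-A u))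
      (Real.exp (-A u) * (f' u - c u * f u)) (Icc a b) u := fun u hu => by
    refine ((hf u hu).mul (hA u hu).neg.exp).congr_deriv ?_
    simp only [Pi.neg_apply]
    ring
  have hmono : MonotoneOn (fun u => f u * Real.exp (-A u)) (Icc a b) := by
    refine monotoneOn_of_hasDerivWithinAt_nonneg
      (f' := fun u => Real.exp (-A u) * (f' u - c u * f u)) (convex_Icc a b)
      (fun u hu => (hg u hu).continuousWithinAt) (fun u hu => ?_) (fun u hu => ?_)
    · rw [interior_Icc] at hu ⊢
      exact (hg u (Ioo_subset_Icc_self hu)).mono Ioo_subset_Icc_self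
    · rw [interior_Icc] at hu
      exact mul_nonneg (Real.exp_pos _).le (sub_nonneg.2 (hle u (Ioo_subset_Icc_self hu)))
  have h := hmono ⟨le_rfl, ht.1.trans ht.2⟩ ht ht.1
  simp only [A, intervalIntegral.integral_same, neg_zero, Real.exp_zero, mul_one] at h
  exact nonneg_of_mul_nonneg_left (ha.trans h) (Real.exp_pos _)

end Calculus

theorem lam_nonneg (n : ℕ) : 0 ≤ lam n := by
  unfold lam; split <;> positivity

theorem lam_zero_rpow {β : ℝ} (hβ : β ≠ 0) : lam 0 ^ β = 0 := by
  simp [lam, Real.zero_rpow hβ]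

theorem lam_rpow_nonneg (n : ℕ) (β : ℝ) : 0 ≤ lam n ^ β :=
  Real.rpow_nonneg (lam_nonneg n) β

theorem half_pow_mul_lam_rpow_le_sq {β : ℝ} (hβ : β ≠ 0) (hβ3 : β ≤ 3) (n : ℕ) :
    (1 / 2 : ℝ) ^ n * lam n ^ β ≤ lam n ^ 2 := by
  rcases Nat.eq_zero_or_pos n with rfl | hn
  · simp [lam, Real.zero_rpow hβ]
  have hlam : lam n = 2 ^ n := if_neg hn.ne'
  have h1 : (1 : ℝ) ≤ lam n := hlam ▸ one_le_pow₀ (by norm_num)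
  calc (1 / 2 : ℝ) ^ n * lam n ^ β ≤ (1 / 2) ^ n * lam n ^ (3 : ℝ) := by gcongr
    _ = ((1 / 2) ^ n * lam n) * lam n ^ 2 := by norm_cast; ring
    _ = lam n ^ 2 := by rw [hlam, ← mul_pow]; norm_num

theorem sq_sub_sq_mul_sub_le {a b c d E : ℝ} (hc : c ∈ Icc 0 E) (hd : d ∈ Icc 0 E) :
    (b ^ 2 - a ^ 2) * (c - d) ≤ E * (a ^ 2 + b ^ 2) := by
  nlinarith [mul_nonneg (sq_nonneg b) hd.1, mul_nonneg (sq_nonneg a) hc.1,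
    mul_nonneg (sq_nonneg b) (sub_nonneg.2 hc.2), mul_nonneg (sq_nonneg a) (sub_nonneg.2 hd.2)]

noncomputable def weightedDist (X Y : ℕ → ℝ → ℝ) (N : ℕ) (t : ℝ) : ℝ :=
  ∑ i ∈ range N, (1 / 2 : ℝ) ^ (i + 1) * (X (i + 1) t - Y (i + 1) t) ^ 2

theorem half_pow_mul_sq_le_weightedDist {X Y : ℕ → ℝ → ℝ} {n N : ℕ} (hn : 1 ≤ n)
    (hnN : n ≤ N) (t : ℝ) :
    (1 / 2 : ℝ) ^ n * (X n t - Y n t) ^ 2 ≤ weightedDist X Y N t := by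
  obtain ⟨k, rfl⟩ : ∃ k, n = k + 1 := ⟨n - 1, by omega⟩
  exact single_le_sum (f := fun i => (1 / 2 : ℝ) ^ (i + 1) * (X (i + 1) t - Y (i + 1) t) ^ 2)
    (fun i _ => by positivity) (mem_range.2 (by omega))

noncomputable def weightedDistDeriv (β ν : ℝ) (X Y : ℕ → ℝ → ℝ) (N : ℕ) (s : ℝ) :
    ℝ :=
  -∑ i ∈ range N, (1 / 2 : ℝ) ^ (i + 1) * (2 * ν * lam (i + 1) ^ 2
      + lam (i + 1) ^ β * (X (i + 2) s + Y (i + 2) s)) * (X (i + 1) s - Y (i + 1) s) ^ 2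
    - (1 / 2 : ℝ) ^ N * lam N ^ β * (X N s ^ 2 - Y N s ^ 2) * (X (N + 1) s - Y (N + 1) s)

theorem weightedDistDeriv_le {β ν E s : ℝ} {X Y : ℕ → ℝ → ℝ} {N : ℕ}
    (hβ : β ≠ 0) (hβ3 : β ≤ 3) (hν : 0 ≤ ν) (hXE : ∀ n, 1 ≤ n → X n s ∈ Icc 0 E)
    (hYE : ∀ n, 1 ≤ n → Y n s ∈ Icc 0 E) :
    weightedDistDeriv β ν X Y N s ≤ E * (lam N ^ 2 * X N s ^ 2 + lam N ^ 2 * Y N s ^ 2) := by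
  have hE : 0 ≤ E := (hXE 1 le_rfl).1.trans (hXE 1 le_rfl).2
  have hdissip : 0 ≤ ∑ i ∈ range N, (1 / 2 : ℝ) ^ (i + 1) * (2 * ν * lam (i + 1) ^ 2
      + lam (i + 1) ^ β * (X (i + 2) s + Y (i + 2) s)) * (X (i + 1) s - Y (i + 1) s) ^ 2 :=
    sum_nonneg fun i _ => by
      have := (hXE (i + 2) (by omega)).1
      have := (hYE (i + 2) (by omega)).1
      have := lam_nonneg (i + 1)
      positivity
  have hcross := sq_sub_sq_mul_sub_le (a := X N s) (b := Y N s)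
    (hXE (N + 1) (by omega)) (hYE (N + 1) (by omega))
  have hw := mul_nonneg (pow_nonneg (by norm_num : (0 : ℝ) ≤ 1 / 2) N) (lam_rpow_nonneg N β)
  calc weightedDistDeriv β ν X Y N s
      ≤ (1 / 2 : ℝ) ^ N * lam N ^ β
          * ((Y N s ^ 2 - X N s ^ 2) * (X (N + 1) s - Y (N + 1) s)) := by
        rw [weightedDistDeriv]; linarith
    _ ≤ (1 / 2 : ℝ) ^ N * lam N ^ β * (E * (X N s ^ 2 + Y N s ^ 2)) :=
        mul_le_mul_of_nonneg_left hcross hw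
    _ ≤ lam N ^ 2 * (E * (X N s ^ 2 + Y N s ^ 2)) :=
        mul_le_mul_of_nonneg_right (half_pow_mul_lam_rpow_le_sq hβ hβ3 N) (by positivity)
    _ = E * (lam N ^ 2 * X N s ^ 2 + lam N ^ 2 * Y N s ^ 2) := by ring

namespace IsViscousSolution

variable {β ν T : ℝ} {I : Set ℝ} {x : ℕ → ℝ} {X Y : ℕ → ℝ → ℝ}

theorem continuousOn (hX : IsViscousSolution β ν I X) {n : ℕ} (hn : 1 ≤ n) :
    ContinuousOn (X n) I :=
  fun t ht => (hX n hn t ht).continuousWithinAt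

theorem nonneg (hX : IsViscousSolution β ν (Icc 0 T) X) (hX0 : ∀ n, 1 ≤ n → 0 ≤ X n 0)
    {n : ℕ} (hn : 1 ≤ n) {t : ℝ} (ht : t ∈ Icc 0 T) : 0 ≤ X n t := by
  refine nonneg_of_hasDerivWithinAt_Icc (hX n hn)
    (c := fun s => -ν * lam n ^ 2 - lam n ^ β * X (n + 1) s)
    (continuousOn_const.sub (continuousOn_const.mul (hX.continuousOn (by omega))))
    (fun s _ => ?_) (hX0 n hn) ht
  have := mul_nonneg (lam_rpow_nonneg (n - 1) β) (sq_nonneg (X (n - 1) s))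
  linarith

theorem hasDerivWithinAt_sum_sq (hβ : β ≠ 0) (hX : IsViscousSolution β ν I X) (N : ℕ)
    {s : ℝ} (hs : s ∈ I) :
    HasDerivWithinAt (fun t => ∑ i ∈ range N, X (i + 1) t ^ 2)
      (-(2 * ν) * ∑ i ∈ range N, lam (i + 1) ^ 2 * X (i + 1) s ^ 2
        - 2 * (lam N ^ β * X N s ^ 2 * X (N + 1) s)) I s := by
  set flux : ℕ → ℝ := fun m => lam m ^ β * X m s ^ 2 * X (m + 1) s
  refine (HasDerivWithinAt.fun_sum fun i _ => (hX (i + 1) (by omega) s hs).pow 2).congr_deriv ?_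
  have hflux0 : flux 0 = 0 := by simp [flux, lam_zero_rpow hβ]
  have htelescope : -(2 * ν) * ∑ i ∈ range N, lam (i + 1) ^ 2 * X (i + 1) s ^ 2
        - 2 * (lam N ^ β * X N s ^ 2 * X (N + 1) s)
      = ∑ i ∈ range N, (-(2 * ν) * (lam (i + 1) ^ 2 * X (i + 1) s ^ 2)
        + 2 * (flux i - flux (i + 1))) := by
    rw [sum_add_distrib, ← mul_sum, ← mul_sum, sum_range_sub' flux, hflux0]
    ring
  rw [htelescope]
  refine sum_congr rfl fun i _ => ?_
  simp only [flux, Nat.add_sub_cancel]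
  push_cast
  ring

theorem sum_sq_add_dissipation_le (hβ : β ≠ 0) (hX : IsViscousSolution β ν (Icc 0 T) X)
    (hnn : ∀ n, 1 ≤ n → ∀ s ∈ Icc 0 T, 0 ≤ X n s) (N : ℕ) {t : ℝ}
    (ht : t ∈ Icc 0 T) :
    ∑ i ∈ range N, X (i + 1) t ^ 2
      + 2 * ν * ∑ i ∈ range N, ∫ s in (0 : ℝ)..t, lam (i + 1) ^ 2 * X (i + 1) s ^ 2
      ≤ ∑ i ∈ range N, X (i + 1) 0 ^ 2 := by
  have hcont : ∀ i, ContinuousOn (fun s => lam (i + 1) ^ 2 * X (i + 1) s ^ 2) (Icc 0 T) :=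
    fun i => continuousOn_const.mul ((hX.continuousOn (by omega)).pow 2)
  have h := sub_le_integral_of_hasDerivWithinAt_Icc
    (fun s hs => hX.hasDerivWithinAt_sum_sq hβ N hs)
    (φ := fun s => -(2 * ν) * ∑ i ∈ range N, lam (i + 1) ^ 2 * X (i + 1) s ^ 2)
    (continuousOn_const.mul (continuousOn_finsetSum _ fun i _ => hcont i))
    (fun s hs => by
      have := mul_nonneg (mul_nonneg (lam_rpow_nonneg N β) (sq_nonneg (X N s)))
        (hnn (N + 1) (by omega) s hs)
      linarith) ht
  rw [intervalIntegral.integral_const_mul, intervalIntegral.integral_finsetSum fun i _ =>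
    ((hcont i).mono (Icc_subset_Icc le_rfl ht.2)).intervalIntegrable_of_Icc ht.1] at h
  linarith

theorem sum_sq_add_dissipation_le_tsum (hβ : β ≠ 0) (hX : IsViscousSolution β ν (Icc 0 T) X)
    (hnn : ∀ n, 1 ≤ n → ∀ s ∈ Icc 0 T, 0 ≤ X n s) (hX0 : ∀ n, 1 ≤ n → X n 0 = x n)
    (hx : Summable fun i => x (i + 1) ^ 2) (N : ℕ) {t : ℝ} (ht : t ∈ Icc 0 T) :
    ∑ i ∈ range N, X (i + 1) t ^ 2
      + 2 * ν * ∑ i ∈ range N, ∫ s in (0 : ℝ)..t, lam (i + 1) ^ 2 * X (i + 1) s ^ 2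
      ≤ ∑' i, x (i + 1) ^ 2 := by
  refine (hX.sum_sq_add_dissipation_le hβ hnn N ht).trans ?_
  rw [sum_congr rfl fun i _ => by rw [hX0 (i + 1) (by omega)]]
  exact hx.sum_le_tsum _ fun i _ => sq_nonneg _

theorem sq_le_tsum (hβ : β ≠ 0) (hν : 0 ≤ ν) (hX : IsViscousSolution β ν (Icc 0 T) X)
    (hnn : ∀ n, 1 ≤ n → ∀ s ∈ Icc 0 T, 0 ≤ X n s) (hX0 : ∀ n, 1 ≤ n → X n 0 = x n)
    (hx : Summable fun i => x (i + 1) ^ 2) {n : ℕ} (hn : 1 ≤ n) {t : ℝ} (ht : t ∈ Icc 0 T) :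
    X n t ^ 2 ≤ ∑' i, x (i + 1) ^ 2 := by
  obtain ⟨k, rfl⟩ : ∃ k, n = k + 1 := ⟨n - 1, by omega⟩
  have h := hX.sum_sq_add_dissipation_le_tsum hβ hnn hX0 hx (k + 1) ht
  have hXk := single_le_sum (fun i _ => sq_nonneg (X (i + 1) t)) (self_mem_range_succ k)
  have hD :
      0 ≤ ∑ i ∈ range (k + 1), ∫ s in (0 : ℝ)..t, lam (i + 1) ^ 2 * X (i + 1) s ^ 2 :=
    sum_nonneg fun i _ => intervalIntegral.integral_nonneg ht.1 fun s _ => by positivity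
  nlinarith

theorem summable_dissipation (hβ : β ≠ 0) (hν : 0 < ν)
    (hX : IsViscousSolution β ν (Icc 0 T) X)
    (hnn : ∀ n, 1 ≤ n → ∀ s ∈ Icc 0 T, 0 ≤ X n s) (hX0 : ∀ n, 1 ≤ n → X n 0 = x n)
    (hx : Summable fun i => x (i + 1) ^ 2) {t : ℝ} (ht : t ∈ Icc 0 T) :
    Summable fun i => ∫ s in (0 : ℝ)..t, lam (i + 1) ^ 2 * X (i + 1) s ^ 2 := by
  refine summable_of_sum_range_le (c := (∑' i, x (i + 1) ^ 2) / (2 * ν))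
    (fun i => intervalIntegral.integral_nonneg ht.1 fun s _ => by positivity) fun N => ?_
  have h := hX.sum_sq_add_dissipation_le_tsum hβ hnn hX0 hx N ht
  have hXN := sum_nonneg fun i (_ : i ∈ range N) => sq_nonneg (X (i + 1) t)
  rw [le_div_iff₀ (by positivity)]
  linarith

theorem hasDerivWithinAt_weightedDist (hβ : β ≠ 0) (hX : IsViscousSolution β ν I X)
    (hY : IsViscousSolution β ν I Y) (N : ℕ) {s : ℝ} (hs : s ∈ I) :
    HasDerivWithinAt (weightedDist X Y N) (weightedDistDeriv β ν X Y N s) I s := by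
  set cross : ℕ → ℝ := fun m =>
    (1 / 2 : ℝ) ^ m * lam m ^ β * (X m s ^ 2 - Y m s ^ 2) * (X (m + 1) s - Y (m + 1) s)
  refine (HasDerivWithinAt.fun_sum fun i _ =>
    (((hX (i + 1) (by omega) s hs).fun_sub (hY (i + 1) (by omega) s hs)).fun_pow 2).const_mul
      ((1 / 2 : ℝ) ^ (i + 1))).congr_deriv ?_
  have hcross0 : cross 0 = 0 := by simp [cross, lam_zero_rpow hβ]
  have htelescope : weightedDistDeriv β ν X Y N s = ∑ i ∈ range N,
      (-((1 / 2 : ℝ) ^ (i + 1) * (2 * ν * lam (i + 1) ^ 2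
          + lam (i + 1) ^ β * (X (i + 2) s + Y (i + 2) s)) * (X (i + 1) s - Y (i + 1) s) ^ 2)
        + (cross i - cross (i + 1))) := by
    rw [sum_add_distrib, sum_neg_distrib, sum_range_sub' cross, hcross0, weightedDistDeriv]
    ring
  rw [htelescope]
  refine sum_congr rfl fun i _ => ?_
  simp only [cross, Nat.add_sub_cancel]
  push_cast
  ring

theorem weightedDist_le (hβ : β ≠ 0) (hβ3 : β ≤ 3) (hν : 0 ≤ ν) {E : ℝ}
    (hX : IsViscousSolution β ν (Icc 0 T) X) (hY : IsViscousSolution β ν (Icc 0 T) Y)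
    (hXE : ∀ n, 1 ≤ n → ∀ s ∈ Icc 0 T, X n s ∈ Icc 0 E)
    (hYE : ∀ n, 1 ≤ n → ∀ s ∈ Icc 0 T, Y n s ∈ Icc 0 E)
    (h0 : ∀ n, 1 ≤ n → X n 0 = Y n 0) {N : ℕ} (hN : 1 ≤ N) {t : ℝ}
    (ht : t ∈ Icc 0 T) :
    weightedDist X Y N t ≤ E * ((∫ s in (0 : ℝ)..t, lam N ^ 2 * X N s ^ 2)
      + ∫ s in (0 : ℝ)..t, lam N ^ 2 * Y N s ^ 2) := by
  have hXc : ContinuousOn (fun s => lam N ^ 2 * X N s ^ 2) (Icc 0 T) :=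
    continuousOn_const.mul ((hX.continuousOn hN).pow 2)
  have hYc : ContinuousOn (fun s => lam N ^ 2 * Y N s ^ 2) (Icc 0 T) :=
    continuousOn_const.mul ((hY.continuousOn hN).pow 2)
  have h := sub_le_integral_of_hasDerivWithinAt_Icc
    (fun s hs => hX.hasDerivWithinAt_weightedDist hβ hY N hs)
    (φ := fun s => E * (lam N ^ 2 * X N s ^ 2 + lam N ^ 2 * Y N s ^ 2))
    (continuousOn_const.mul (hXc.add hYc))
    (fun s hs => weightedDistDeriv_le hβ hβ3 hν (fun n hn => hXE n hn s hs)
      (fun n hn => hYE n hn s hs)) ht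
  have hdist0 : weightedDist X Y N 0 = 0 :=
    sum_eq_zero fun i _ => by rw [h0 (i + 1) (by omega), sub_self]; ring
  have hsub : Icc 0 t ⊆ Icc 0 T := Icc_subset_Icc le_rfl ht.2
  rwa [hdist0, sub_zero, intervalIntegral.integral_const_mul, intervalIntegral.integral_add
    ((hXc.mono hsub).intervalIntegrable_of_Icc ht.1)
    ((hYc.mono hsub).intervalIntegrable_of_Icc ht.1)] at h

end IsViscousSolution

theorem viscous_uniqueness_beta_le_three_general
    (β ν T : ℝ) (hβ0 : 0 < β) (hβ3 : β ≤ 3) (hν : 0 < ν)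
    (x : ℕ → ℝ) (hxpos : ∀ n, 1 ≤ n → 0 ≤ x n)
    (hxH : Summable fun n => x (n + 1) ^ 2)
    (X Y : ℕ → ℝ → ℝ)
    (hX : IsViscousSolution β ν (Set.Icc 0 T) X) (hX0 : ∀ n, 1 ≤ n → X n 0 = x n)
    (hY : IsViscousSolution β ν (Set.Icc 0 T) Y) (hY0 : ∀ n, 1 ≤ n → Y n 0 = x n) :
    ∀ n, 1 ≤ n → ∀ t ∈ Set.Icc (0 : ℝ) T, X n t = Y n t := by
  intro n hn t ht
  have hβ := hβ0.ne'
  have hXnn : ∀ m, 1 ≤ m → ∀ s ∈ Icc 0 T, 0 ≤ X m s := fun m hm s hs =>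
    hX.nonneg (fun k hk => (hX0 k hk).symm ▸ hxpos k hk) hm hs
  have hYnn : ∀ m, 1 ≤ m → ∀ s ∈ Icc 0 T, 0 ≤ Y m s := fun m hm s hs =>
    hY.nonneg (fun k hk => (hY0 k hk).symm ▸ hxpos k hk) hm hs
  set E := √(∑' i, x (i + 1) ^ 2)
  have hXE : ∀ m, 1 ≤ m → ∀ s ∈ Icc 0 T, X m s ∈ Icc 0 E := fun m hm s hs =>
    ⟨hXnn m hm s hs, (le_abs_self _).trans
      (Real.abs_le_sqrt (hX.sq_le_tsum hβ hν.le hXnn hX0 hxH hm hs))⟩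
  have hYE : ∀ m, 1 ≤ m → ∀ s ∈ Icc 0 T, Y m s ∈ Icc 0 E := fun m hm s hs =>
    ⟨hYnn m hm s hs, (le_abs_self _).trans
      (Real.abs_le_sqrt (hY.sq_le_tsum hβ hν.le hYnn hY0 hxH hm hs))⟩
  have hlim : Tendsto (fun j => E * ((∫ s in (0 : ℝ)..t, lam (j + 1) ^ 2 * X (j + 1) s ^ 2)
      + ∫ s in (0 : ℝ)..t, lam (j + 1) ^ 2 * Y (j + 1) s ^ 2)) atTop (𝓝 0) := by
    simpa using ((hX.summable_dissipation hβ hν hXnn hX0 hxH ht).add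
      (hY.summable_dissipation hβ hν hYnn hY0 hxH ht)).tendsto_atTop_zero.const_mul E
  have hbound := eventually_atTop.2 ⟨n, fun j hj =>
    (half_pow_mul_sq_le_weightedDist (X := X) (Y := Y) hn (Nat.le_succ_of_le hj) t).trans
      (hX.weightedDist_le hβ hβ3 hν.le hY hXE hYE
        (fun m hm => (hX0 m hm).trans (hY0 m hm).symm) (Nat.le_add_left 1 j) ht)⟩
  have hsq := nonpos_of_mul_nonpos_right (ge_of_tendsto hlim hbound) (by positivity)
  exact sub_eq_zero.1 ((sq_nonpos_iff _).1 hsq)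

/-- for `0 < β ≤ 3`, the viscous dyadic model has at most one weak
solution for every nonnegative square-summable initial condition. -/
theorem viscous_uniqueness_beta_le_three
    (β ν T : ℝ) (hβ0 : 0 < β) (hβ3 : β ≤ 3) (hν : 0 < ν) (hT : 0 < T)
    (x : ℕ → ℝ) (hxpos : ∀ n, 1 ≤ n → 0 ≤ x n)
    (hxH : Summable fun n => x (n + 1) ^ 2)
    (X Y : ℕ → ℝ → ℝ)
    (hX : IsViscousSolution β ν (Set.Icc 0 T) X) (hX0 : ∀ n, 1 ≤ n → X n 0 = x n)
    (hY : IsViscousSolution β ν (Set.Icc 0 T) Y) (hY0 : ∀ n, 1 ≤ n → Y n 0 = x n) :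
    ∀ n, 1 ≤ n → ∀ t ∈ Set.Icc (0 : ℝ) T, X n t = Y n t :=
  viscous_uniqueness_beta_le_three_general β ν T hβ0 hβ3 hν x hxpos hxH X Y hX hX0 hY hY0
end

section
/- Let β > 0, ν > 0, T > 0, and let X = (X_n)_{n≥1} be a weak solution of the viscous dyadic model on [0,T] such that X(0) ∈ 𝒟^∞ and lim_{n→∞} ( sup_{t∈[0,T]} (λ_n^{β-2} |X_n(t)|) ) = 0. Then X(t) ∈ 𝒟^∞ for all t ∈ [0,T], i.e. for every γ > 0, sup_{t∈[0,T]} sup_{n≥1} (λ_n^γ |X_n(t)|) < ∞. -/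
open Set Real

theorem abs_le_abs_add_div_of_hasDerivWithinAt_neg_mul_add {Y G : ℝ → ℝ} {k g a b t : ℝ}
    (hk : 0 < k) (hY : ∀ s ∈ Icc a b, HasDerivWithinAt Y (-k * Y s + G s) (Icc a b) s)
    (hG : ∀ s ∈ Icc a b, |G s| ≤ g) (ht : t ∈ Icc a b) : |Y t| ≤ |Y a| + g / k := by
  have hg : 0 ≤ g := (abs_nonneg _).trans (hG t ht)
  set E : ℝ → ℝ := fun s => exp (k * (s - a)) with hE_def
  have hE : ∀ s, HasDerivAt E (k * E s) s := fun s => by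
    simpa [hE_def, mul_comm] using (((hasDerivAt_id s).sub_const a).const_mul k).exp
  -- the integrating factor `E` turns the equation into `(E Y)' = E G`
  have hEY : ∀ s ∈ Ico a b, HasDerivWithinAt (fun s => E s * Y s) (E s * G s) (Ici s) s := by
    intro s hs
    have hYs : HasDerivWithinAt Y (-k * Y s + G s) (Ici s) s :=
      ((hY s (Ico_subset_Icc_self hs)).mono (Icc_subset_Icc_left hs.1)).mono_of_mem_nhdsWithin
        (Icc_mem_nhdsGE_of_mem ⟨le_rfl, hs.2⟩)
    exact ((hE s).hasDerivWithinAt.mul hYs).congr_deriv (by ring)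
  have hB : ∀ s, HasDerivAt (fun s => |Y a| + g / k * (E s - 1)) (g * E s) s := fun s =>
    ((((hE s).sub_const 1).const_mul (g / k)).const_add _).congr_deriv (by field_simp)
  have hEY_cont : ContinuousOn (fun s => E s * Y s) (Icc a b) :=
    (continuous_iff_continuousAt.2 fun s => (hE s).continuousAt).continuousOn.mul
      fun s hs => (hY s hs).continuousWithinAt
  have hEG : ∀ s ∈ Ico a b, ‖E s * G s‖ ≤ g * E s := fun s hs => by
    rw [norm_mul, Real.norm_of_nonneg (exp_pos _).le, mul_comm]
    exact mul_le_mul_of_nonneg_right (hG s (Ico_subset_Icc_self hs)) (exp_pos _).le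
  have hfence := image_norm_le_of_norm_deriv_right_le_deriv_boundary hEY_cont hEY
    (by simp [hE_def]) hB hEG ht
  rw [norm_mul, Real.norm_of_nonneg (exp_pos _).le, Real.norm_eq_abs] at hfence
  have hE1 : 1 ≤ E t := one_le_exp (mul_nonneg hk.le (sub_nonneg.2 ht.1))
  have hgk : 0 ≤ g / k := div_nonneg hg hk.le
  have hscaled : E t * |Y t| ≤ E t * (|Y a| + g / k) := by nlinarith [abs_nonneg (Y a)]
  exact le_of_mul_le_mul_left hscaled (exp_pos _)

noncomputable def supAbsOn (f : ℝ → ℝ) (s : Set ℝ) : ℝ := sSup ((fun t => |f t|) '' s)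

section supAbsOn

variable {f : ℝ → ℝ} {s : Set ℝ}

theorem supAbsOn_nonneg : 0 ≤ supAbsOn f s :=
  Real.sSup_nonneg <| by rintro _ ⟨t, -, rfl⟩; exact abs_nonneg _

theorem abs_le_supAbsOn (hs : IsCompact s) (hf : ContinuousOn f s) {t : ℝ}
    (ht : t ∈ s) : |f t| ≤ supAbsOn f s :=
  le_csSup (hs.image_of_continuousOn hf.abs).bddAbove ⟨t, ht, rfl⟩

theorem supAbsOn_le (hs : s.Nonempty) {c : ℝ} (h : ∀ t ∈ s, |f t| ≤ c) :
    supAbsOn f s ≤ c :=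
  csSup_le (hs.image _) <| by rintro _ ⟨t, ht, rfl⟩; exact h t ht

end supAbsOn

theorem lam_pos {n : ℕ} (hn : 1 ≤ n) : 0 < lam n := by
  rw [lam, if_neg (by omega)]; positivity

theorem lam_succ {n : ℕ} (hn : 1 ≤ n) : lam (n + 1) = 2 * lam n := by
  rw [lam, lam, if_neg (by omega), if_neg (by omega), pow_succ, mul_comm]

theorem lam_succ_rpow {n : ℕ} (hn : 1 ≤ n) (a : ℝ) : lam (n + 1) ^ a = 2 ^ a * lam n ^ a := by
  rw [lam_succ hn, mul_rpow (by norm_num) (lam_pos hn).le]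

theorem rpow_eq_rpow_sub_two_mul_sq {x : ℝ} (hx : 0 < x) (β : ℝ) :
    x ^ β = x ^ (β - 2) * x ^ 2 := by
  rw [rpow_sub hx, rpow_two]; field_simp

/-- Each `λ^β` is split as `λ^(β-2) · λ²`: the first factor is small by the decay hypothesis,
the second is absorbed by the dissipation. -/
theorem abs_flux_le {n : ℕ} (hn : 1 ≤ n) (β x y z : ℝ) :
    |lam n ^ β * x ^ 2 - lam (n + 1) ^ β * y * z| ≤
      lam n ^ (β - 2) * |x| * (lam n ^ 2 * |x|)
        + 2 ^ (2 - β) * (lam (n + 2) ^ (β - 2) * |z|) * (lam (n + 1) ^ 2 * |y|) := by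
  have hn1 : 1 ≤ n + 1 := by omega
  have h2 : (2 : ℝ) ^ (2 - β) * 2 ^ (β - 2) = 1 := by
    rw [← rpow_add two_pos]; norm_num
  have hx : lam n ^ β * x ^ 2 = lam n ^ (β - 2) * |x| * (lam n ^ 2 * |x|) := by
    rw [rpow_eq_rpow_sub_two_mul_sq (lam_pos hn), ← sq_abs x]; ring
  have hyz : |lam (n + 1) ^ β * y * z| =
      2 ^ (2 - β) * (lam (n + 2) ^ (β - 2) * |z|) * (lam (n + 1) ^ 2 * |y|) := by
    rw [abs_mul, abs_mul, abs_of_pos (rpow_pos_of_pos (lam_pos hn1) _),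
      show lam (n + 2) ^ (β - 2) = 2 ^ (β - 2) * lam (n + 1) ^ (β - 2) from lam_succ_rpow hn1 _,
      rpow_eq_rpow_sub_two_mul_sq (lam_pos hn1)]
    linear_combination (-(lam (n + 1) ^ (β - 2) * lam (n + 1) ^ 2 * |y| * |z|)) * h2
  calc _ ≤ |lam n ^ β * x ^ 2| + |lam (n + 1) ^ β * y * z| := abs_sub _ _
    _ = _ := by
      rw [hyz, abs_of_nonneg (mul_nonneg (rpow_nonneg (lam_pos hn).le _) (sq_nonneg x)), hx]

theorem bddAbove_range_of_le_add_half {b : ℕ → ℝ} {c : ℝ} {N : ℕ}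
    (h : ∀ n ≥ N, b (n + 1) ≤ c + b n / 2) : BddAbove (range b) := by
  have htail : ∀ n ≥ N, b n ≤ max (b N) (2 * c) := by
    intro n hn
    induction n, hn using Nat.le_induction with
    | base => exact le_max_left _ _
    | succ n hn ih => linarith [h n hn, le_max_right (b N) (2 * c)]
  have hsplit : range b ⊆ b '' Iio N ∪ b '' Ici N := by
    rintro _ ⟨n, rfl⟩
    rcases lt_or_ge n N with hn | hn
    exacts [Or.inl ⟨n, hn, rfl⟩, Or.inr ⟨n, hn, rfl⟩]
  refine (((finite_Iio N).image b).bddAbove.union ⟨max (b N) (2 * c), ?_⟩).mono hsplit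
  rintro _ ⟨n, hn, rfl⟩
  exact htail n hn

section ViscousDyadic

variable {β ν T η : ℝ} {X : ℕ → ℝ → ℝ} {n : ℕ}

theorem IsViscousSolution.continuousOn_s4 (hX : IsViscousSolution β ν (Icc 0 T) X) (hn : 1 ≤ n) :
    ContinuousOn (X n) (Icc 0 T) :=
  fun t ht => (hX n hn t ht).continuousWithinAt

theorem IsViscousSolution.supAbsOn_succ_le (hX : IsViscousSolution β ν (Icc 0 T) X)
    (hT : 0 ≤ T) (hν : 0 < ν) (hn : 1 ≤ n)
    (hη : ∀ m ≥ n, ∀ t ∈ Icc 0 T, lam m ^ (β - 2) * |X m t| ≤ η) :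
    supAbsOn (X (n + 1)) (Icc 0 T) ≤ |X (n + 1) 0| +
      (η * (lam n ^ 2 * supAbsOn (X n) (Icc 0 T))
        + 2 ^ (2 - β) * η * (lam (n + 1) ^ 2 * supAbsOn (X (n + 1)) (Icc 0 T)))
        / (ν * lam (n + 1) ^ 2) := by
  have hn1 : 1 ≤ n + 1 := by omega
  have hη0 : 0 ≤ η := (mul_nonneg (rpow_nonneg (lam_pos hn).le _) (abs_nonneg _)).trans
    (hη n le_rfl 0 ⟨le_rfl, hT⟩)
  have hY : ∀ s ∈ Icc 0 T, HasDerivWithinAt (X (n + 1)) (-(ν * lam (n + 1) ^ 2) * X (n + 1) s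
      + (lam n ^ β * X n s ^ 2 - lam (n + 1) ^ β * X (n + 1) s * X (n + 2) s)) (Icc 0 T) s :=
    fun s hs => (hX (n + 1) hn1 s hs).congr_deriv (by simp only [Nat.add_sub_cancel]; ring)
  refine supAbsOn_le (nonempty_Icc.2 hT) fun t ht =>
    abs_le_abs_add_div_of_hasDerivWithinAt_neg_mul_add (by positivity [lam_pos hn1]) hY
      (fun s hs => (abs_flux_le hn β _ _ _).trans ?_) ht
  gcongr
  · exact hη n le_rfl s hs
  · exact abs_le_supAbsOn isCompact_Icc (hX.continuousOn_s4 hn) hs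
  · exact hη (n + 2) (by omega) s hs
  · exact abs_le_supAbsOn isCompact_Icc (hX.continuousOn_s4 hn1) hs

theorem IsViscousSolution.weighted_supAbsOn_succ_le (hX : IsViscousSolution β ν (Icc 0 T) X)
    (hT : 0 ≤ T) (hν : 0 < ν) (hn : 1 ≤ n)
    (hη : ∀ m ≥ n, ∀ t ∈ Icc 0 T, lam m ^ (β - 2) * |X m t| ≤ η) {γ C : ℝ}
    (hηγ : 2 ^ γ * η ≤ ν) (hηβ : 2 ^ (2 - β) * η ≤ ν / 2)
    (hC : lam (n + 1) ^ γ * |X (n + 1) 0| ≤ C) :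
    lam (n + 1) ^ γ * supAbsOn (X (n + 1)) (Icc 0 T) ≤
      2 * C + lam n ^ γ * supAbsOn (X n) (Icc 0 T) / 2 := by
  have hstep := hX.supAbsOn_succ_le hT hν hn hη
  rw [lam_succ_rpow hn] at hC ⊢
  rw [lam_succ hn] at hstep
  set s := supAbsOn (X n) (Icc 0 T)
  set s' := supAbsOn (X (n + 1)) (Icc 0 T)
  have hL := lam_pos hn
  have hp : 0 < lam n ^ γ := rpow_pos_of_pos hL γ
  have hq : (0 : ℝ) < 2 ^ γ := rpow_pos_of_pos two_pos γ
  -- dividing by the dissipation rate `ν (2 λ_n)²` leaves the relative sizes `2^γ η / ν ≤ 1`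
  -- and `2^(2-β) η / ν ≤ 1/2`
  have hsplit : 2 ^ γ * lam n ^ γ *
      ((η * (lam n ^ 2 * s) + 2 ^ (2 - β) * η * ((2 * lam n) ^ 2 * s')) / (ν * (2 * lam n) ^ 2)) =
      2 ^ γ * η / ν * (lam n ^ γ * s) / 4 + 2 ^ (2 - β) * η / ν * (2 ^ γ * lam n ^ γ * s') := by
    field_simp; ring
  have hu : 2 ^ γ * η / ν ≤ 1 := (div_le_one hν).2 hηγ
  have hv : 2 ^ (2 - β) * η / ν ≤ 1 / 2 := by rw [div_le_iff₀ hν]; linarith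
  have hs : 0 ≤ lam n ^ γ * s := mul_nonneg hp.le supAbsOn_nonneg
  have hs' : 0 ≤ 2 ^ γ * lam n ^ γ * s' := mul_nonneg (mul_pos hq hp).le supAbsOn_nonneg
  have hscaled := mul_le_mul_of_nonneg_left hstep (mul_pos hq hp).le
  rw [mul_add, hsplit] at hscaled
  nlinarith [mul_le_mul_of_nonneg_right hu hs, mul_le_mul_of_nonneg_right hv hs']

end ViscousDyadic

theorem viscous_regularity_criterion_general
    (β ν T : ℝ) (hν : 0 < ν) (hT : 0 < T)
    (X : ℕ → ℝ → ℝ) (hX : IsViscousSolution β ν (Set.Icc 0 T) X)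
    (hX0 : ∀ γ : ℝ, 0 < γ → ∃ C : ℝ, ∀ n, 1 ≤ n → lam n ^ γ * |X n 0| ≤ C)
    (hlim : ∀ η : ℝ, 0 < η → ∃ N : ℕ, ∀ n, N ≤ n → ∀ t ∈ Set.Icc (0 : ℝ) T,
      lam n ^ (β - 2) * |X n t| ≤ η) :
    ∀ γ : ℝ, 0 < γ → ∃ C : ℝ, ∀ t ∈ Set.Icc (0 : ℝ) T, ∀ n, 1 ≤ n →
      lam n ^ γ * |X n t| ≤ C := by
  intro γ hγ
  obtain ⟨C, hC⟩ := hX0 γ hγ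
  obtain ⟨η, hη, hηγ, hηβ⟩ : ∃ η > 0, 2 ^ γ * η ≤ ν ∧ 2 ^ (2 - β) * η ≤ ν / 2 :=
    ⟨min (ν / 2 ^ γ) (ν / 2 / 2 ^ (2 - β)), by positivity,
      (le_div_iff₀' (by positivity)).1 (min_le_left _ _),
      (le_div_iff₀' (by positivity)).1 (min_le_right _ _)⟩
  obtain ⟨N, hN⟩ := hlim η hη
  obtain ⟨D, hD⟩ := bddAbove_range_of_le_add_half
    (b := fun n => lam n ^ γ * supAbsOn (X n) (Icc 0 T)) (N := max N 1) fun n hn =>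
      hX.weighted_supAbsOn_succ_le hT.le hν (le_of_max_le_right hn)
        (fun m hm => hN m (le_of_max_le_left (hn.trans hm))) hηγ hηβ
        (hC (n + 1) (by omega))
  refine ⟨D, fun t ht n hn => le_trans ?_ (hD ⟨n, rfl⟩)⟩
  exact mul_le_mul_of_nonneg_left (abs_le_supAbsOn isCompact_Icc (hX.continuousOn_s4 hn) ht)
    (rpow_nonneg (lam_pos hn).le γ)

/-- regularity criterion. If `X(0) ∈ 𝒟^∞` and
`lim_{n→∞} sup_{t∈[0,T]} λ_n^{β-2} |X_n(t)| = 0`, then `X(t) ∈ 𝒟^∞` for all `t`,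
uniformly: for every `γ > 0`, `sup_{t∈[0,T]} sup_{n≥1} λ_n^γ |X_n(t)| < ∞`. -/
theorem viscous_regularity_criterion
    (β ν T : ℝ) (hβ : 0 < β) (hν : 0 < ν) (hT : 0 < T)
    (X : ℕ → ℝ → ℝ) (hX : IsViscousSolution β ν (Set.Icc 0 T) X)
    (hX0 : ∀ γ : ℝ, 0 < γ → ∃ C : ℝ, ∀ n, 1 ≤ n → lam n ^ γ * |X n 0| ≤ C)
    (hlim : ∀ η : ℝ, 0 < η → ∃ N : ℕ, ∀ n, N ≤ n → ∀ t ∈ Set.Icc (0 : ℝ) T,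
      lam n ^ (β - 2) * |X n t| ≤ η) :
    ∀ γ : ℝ, 0 < γ → ∃ C : ℝ, ∀ t ∈ Set.Icc (0 : ℝ) T, ∀ n, 1 ≤ n →
      lam n ^ γ * |X n t| ≤ C :=
  viscous_regularity_criterion_general β ν T hν hT X hX hX0 hlim
end

section
/- Let β > 0, ν > 0, T > 0, and let X = (X_n)_{n≥1} be a weak solution of the viscous dyadic model on [0,T] such that X(0) ∈ 𝒟^∞ and, for some ε > 0, sup_{n≥1} ( sup_{t∈[0,T]} (λ_n^{β-2+ε} |X_n(t)|) ) < ∞. Then X(t) ∈ 𝒟^∞ for all t ∈ [0,T]. -/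
section AuxiliaryDyadic
open Set Real

lemma lam_eq_rpow {n : ℕ} (hn : 1 ≤ n) : lam n = (2:ℝ) ^ (n:ℝ) := by
  simp [lam, Nat.one_le_iff_ne_zero.mp hn, Real.rpow_natCast]

lemma lam_rpow {n : ℕ} (hn : 1 ≤ n) (x : ℝ) : lam n ^ x = (2:ℝ) ^ ((n:ℝ) * x) := by
  rw [lam_eq_rpow hn, ← Real.rpow_mul (by norm_num)]

lemma lam_sq {n : ℕ} (hn : 1 ≤ n) : lam n ^ 2 = (2:ℝ) ^ ((n:ℝ) * 2) := by
  rw [← Real.rpow_natCast (lam n) 2, lam_rpow hn]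
  norm_num

lemma two_rpow_le {x y : ℝ} (h : x ≤ y) : (2:ℝ) ^ x ≤ (2:ℝ) ^ y :=
  Real.rpow_le_rpow_of_exponent_le one_le_two h


lemma dampedOdeBound {T a M : ℝ} (ha : 0 < a) (hM : 0 ≤ M)
    {f g : ℝ → ℝ}
    (hf : ∀ t ∈ Icc (0:ℝ) T, HasDerivWithinAt f (g t) (Icc (0:ℝ) T) t)
    (hg : ∀ t ∈ Icc (0:ℝ) T, |g t + a * f t| ≤ M) :
    ∀ t ∈ Icc (0:ℝ) T, |f t| ≤ |f 0| + M / a := by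
  intro t ht
  have hT0 : (0:ℝ) ∈ Icc (0:ℝ) T := ⟨le_refl 0, ht.1.trans ht.2⟩
  have hfc : ContinuousOn f (Icc (0:ℝ) T) := fun s hs => (hf s hs).continuousWithinAt
  have key : ∀ σ : ℝ, σ = 1 ∨ σ = -1 → σ * f t ≤ |f 0| + M / a := by
    intro σ hσ
    have hσabs : |σ| = 1 := by rcases hσ with h | h <;> simp [h]
    set h₁ : ℝ → ℝ := fun s => Real.exp (a * s) * (σ * f s - M / a) with hh₁
    have hanti : AntitoneOn h₁ (Icc (0:ℝ) T) := by
      apply antitoneOn_of_hasDerivWithinAt_nonpos (convex_Icc 0 T)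
        (f' := fun s => Real.exp (a * s) * (σ * g s + a * (σ * f s) - M))
      · exact ((Real.continuous_exp.comp (continuous_const.mul continuous_id)).continuousOn.mul
          ((continuousOn_const.mul hfc).sub continuousOn_const))
      · intro s hs
        rw [interior_Icc] at hs ⊢
        have he : HasDerivAt (fun u : ℝ => Real.exp (a * u)) (Real.exp (a * s) * a) s := by
          simpa using ((hasDerivAt_id s).const_mul a).exp
        have hd : HasDerivWithinAt h₁
            (Real.exp (a * s) * a * (σ * f s - M / a) + Real.exp (a * s) * (σ * g s))
            (Icc (0:ℝ) T) s :=
          he.hasDerivWithinAt.mul (((hf s (Ioo_subset_Icc_self hs)).const_mul σ).sub_const _)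
        have heq : Real.exp (a * s) * a * (σ * f s - M / a) + Real.exp (a * s) * (σ * g s)
            = Real.exp (a * s) * (σ * g s + a * (σ * f s) - M) := by
          field_simp; ring
        rw [heq] at hd
        exact hd.mono Ioo_subset_Icc_self
      · intro s hs
        rw [interior_Icc] at hs
        have hb := hg s (Ioo_subset_Icc_self hs)
        have h1 : σ * g s + a * (σ * f s) ≤ M := by
          have h2 : |σ * (g s + a * f s)| ≤ M := by rwa [abs_mul, hσabs, one_mul]
          nlinarith [le_abs_self (σ * (g s + a * f s))]
        have hep := Real.exp_pos (a * s)
        nlinarith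
    have hmono := hanti hT0 ht ht.1
    -- h₁ t ≤ h₁ 0 : exp(a t)(σ f t - M/a) ≤ σ f 0 - M/a
    simp only [hh₁, mul_zero, Real.exp_zero, one_mul] at hmono
    have hexp1 : (1:ℝ) ≤ Real.exp (a * t) :=
      Real.one_le_exp (mul_nonneg ha.le ht.1)
    have hMa : 0 ≤ M / a := by positivity
    rcases le_or_gt (σ * f t - M / a) 0 with hle | hpos
    · have : σ * f t ≤ M / a := by linarith
      calc σ * f t ≤ M / a := this
        _ ≤ |f 0| + M / a := by linarith [abs_nonneg (f 0)]
    · have h3 : σ * f t - M / a ≤ Real.exp (a * t) * (σ * f t - M / a) := by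
        nlinarith
      have h4 : σ * f t ≤ σ * f 0 := by linarith
      have h5 : σ * f 0 ≤ |f 0| := by
        calc σ * f 0 ≤ |σ * f 0| := le_abs_self _
          _ = |f 0| := by rw [abs_mul, hσabs, one_mul]
      linarith
  rw [abs_le]
  constructor
  · have := key (-1) (Or.inr rfl); linarith
  · have := key 1 (Or.inl rfl); linarith

lemma bootstrap (β ν T : ℝ) (hβ : 0 < β) (hν : 0 < ν)
    (X : ℕ → ℝ → ℝ) (hX : IsViscousSolution β ν (Set.Icc 0 T) X)
    (hX0 : ∀ γ : ℝ, 0 < γ → ∃ C : ℝ, ∀ n, 1 ≤ n → lam n ^ γ * |X n 0| ≤ C)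
    (α C : ℝ) (hC : 0 ≤ C)
    (h : ∀ n, 1 ≤ n → ∀ t ∈ Set.Icc (0:ℝ) T, |X n t| ≤ C * (2:ℝ) ^ ((n:ℝ) * (-α))) :
    ∃ C' : ℝ, 0 ≤ C' ∧ ∀ n, 1 ≤ n → ∀ t ∈ Set.Icc (0:ℝ) T,
      |X n t| ≤ C' * (2:ℝ) ^ ((n:ℝ) * (-(2*α+2-β))) := by
  obtain ⟨C₀, hC₀⟩ := hX0 (max (2*α+2-β) 1) (lt_max_of_lt_right one_pos)
  set K : ℝ := C^2 * ((2:ℝ) ^ |β - 2*α| + (2:ℝ) ^ |α|) with hK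
  have hKnn : 0 ≤ K := by positivity
  refine ⟨max C₀ 0 + K / ν, by positivity, ?_⟩
  intro n hn t ht
  have h2n : (0:ℝ) < (2:ℝ) ^ ((n:ℝ) * 2) := by positivity
  have ha : 0 < ν * lam n ^ 2 := by rw [lam_sq hn]; positivity
  set M : ℝ := K * (2:ℝ) ^ ((n:ℝ) * (β - 2*α)) with hM
  have hMnn : 0 ≤ M := by positivity
  -- the forcing term bound
  have hF : ∀ s ∈ Icc (0:ℝ) T,
      |lam (n-1) ^ β * (X (n-1) s) ^ 2 - lam n ^ β * X n s * X (n+1) s| ≤ M := by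
    intro s hs
    have hA : |lam (n-1) ^ β * (X (n-1) s) ^ 2|
        ≤ C^2 * (2:ℝ) ^ |β - 2*α| * (2:ℝ) ^ ((n:ℝ) * (β - 2*α)) := by
      obtain ⟨m, rfl⟩ : ∃ m, n = m + 1 := ⟨n - 1, (Nat.succ_pred_eq_of_pos hn).symm⟩
      simp only [Nat.add_sub_cancel]
      rcases Nat.eq_zero_or_pos m with hm | hm
      · subst hm
        simp [lam, Real.zero_rpow hβ.ne']
        positivity
      · have hXm := h m hm s hs
        calc |lam m ^ β * (X m s) ^ 2| = lam m ^ β * |X m s| ^ 2 := by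
              rw [abs_mul, abs_of_nonneg (by rw [lam_rpow hm]; positivity), abs_pow, sq_abs]
          _ ≤ (2:ℝ) ^ ((m:ℝ) * β) * (C * (2:ℝ) ^ ((m:ℝ) * (-α))) ^ 2 := by
              rw [lam_rpow hm]
              gcongr
              try exact abs_nonneg _
          _ = C^2 * (2:ℝ) ^ ((m:ℝ) * β + ((m:ℝ) * (-α) + (m:ℝ) * (-α))) := by
              rw [Real.rpow_add two_pos, Real.rpow_add two_pos]; ring
          _ ≤ C^2 * (2:ℝ) ^ (|β - 2*α| + ((m:ℝ)+1) * (β - 2*α)) :=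
              mul_le_mul_of_nonneg_left
                (two_rpow_le (by nlinarith [neg_abs_le (β - 2*α)])) (by positivity)
          _ = C^2 * (2:ℝ) ^ |β - 2*α| * (2:ℝ) ^ ((((m:ℕ):ℝ)+1) * (β - 2*α)) := by
              rw [Real.rpow_add two_pos]; ring
          _ = C^2 * (2:ℝ) ^ |β - 2*α| * (2:ℝ) ^ (((m+1:ℕ):ℝ) * (β - 2*α)) := by
              push_cast; ring_nf
    have hB : |lam n ^ β * X n s * X (n+1) s|
        ≤ C^2 * (2:ℝ) ^ |α| * (2:ℝ) ^ ((n:ℝ) * (β - 2*α)) := by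
      have hXn := h n hn s hs
      have hXn1 := h (n+1) (by omega) s hs
      calc |lam n ^ β * X n s * X (n+1) s| = lam n ^ β * |X n s| * |X (n+1) s| := by
            rw [abs_mul, abs_mul, abs_of_nonneg (by rw [lam_rpow hn]; positivity)]
        _ ≤ (2:ℝ) ^ ((n:ℝ) * β) * (C * (2:ℝ) ^ ((n:ℝ) * (-α))) * (C * (2:ℝ) ^ ((((n+1:ℕ)):ℝ) * (-α))) := by
            rw [lam_rpow hn]
            gcongr <;> first | positivity | exact abs_nonneg _
        _ = C^2 * (2:ℝ) ^ ((n:ℝ) * β + ((n:ℝ) * (-α) + ((n:ℝ)+1) * (-α))) := by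
            rw [Real.rpow_add two_pos, Real.rpow_add two_pos]; push_cast; ring
        _ ≤ C^2 * (2:ℝ) ^ (|α| + (n:ℝ) * (β - 2*α)) :=
            mul_le_mul_of_nonneg_left
              (two_rpow_le (by push_cast; nlinarith [neg_abs_le α])) (by positivity)
        _ = C^2 * (2:ℝ) ^ |α| * (2:ℝ) ^ ((n:ℝ) * (β - 2*α)) := by
            rw [Real.rpow_add two_pos]; ring
    calc |lam (n-1) ^ β * (X (n-1) s) ^ 2 - lam n ^ β * X n s * X (n+1) s|
        ≤ |lam (n-1) ^ β * (X (n-1) s) ^ 2| + |lam n ^ β * X n s * X (n+1) s| := abs_sub _ _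
      _ ≤ C^2 * (2:ℝ) ^ |β - 2*α| * (2:ℝ) ^ ((n:ℝ) * (β - 2*α))
          + C^2 * (2:ℝ) ^ |α| * (2:ℝ) ^ ((n:ℝ) * (β - 2*α)) := add_le_add hA hB
      _ = M := by rw [hM, hK]; ring
  -- apply the ODE bound
  have hode := dampedOdeBound (T := T) ha hMnn
      (f := X n)
      (g := fun s => -ν * lam n ^ 2 * X n s + lam (n - 1) ^ β * (X (n - 1) s) ^ 2
        - lam n ^ β * X n s * X (n + 1) s)
      (fun s hs => hX n hn s hs)
      (by
        intro s hs
        have : -ν * lam n ^ 2 * X n s + lam (n - 1) ^ β * (X (n - 1) s) ^ 2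
            - lam n ^ β * X n s * X (n + 1) s + ν * lam n ^ 2 * X n s
            = lam (n-1) ^ β * (X (n-1) s) ^ 2 - lam n ^ β * X n s * X (n+1) s := by ring
        rw [this]
        exact hF s hs)
      t ht
  -- bound the initial datum
  have hX0n : |X n 0| ≤ max C₀ 0 * (2:ℝ) ^ ((n:ℝ) * (β - 2*α - 2)) := by
    have h1 := hC₀ n hn
    rw [lam_rpow hn] at h1
    have hp : (0:ℝ) < (2:ℝ) ^ ((n:ℝ) * max (2*α+2-β) 1) := by positivity
    have h2 : |X n 0| ≤ C₀ * (2:ℝ) ^ ((n:ℝ) * (-(max (2*α+2-β) 1))) := by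
      rw [mul_neg, Real.rpow_neg (by norm_num), ← div_eq_mul_inv]
      rw [le_div_iff₀ hp]
      linarith [h1]
    calc |X n 0| ≤ C₀ * (2:ℝ) ^ ((n:ℝ) * (-(max (2*α+2-β) 1))) := h2
      _ ≤ max C₀ 0 * (2:ℝ) ^ ((n:ℝ) * (β - 2*α - 2)) := by
          apply mul_le_mul (le_max_left _ _) (two_rpow_le ?_) (by positivity) (le_max_right _ _)
          have hn1 : (1:ℝ) ≤ (n:ℝ) := by exact_mod_cast hn
          have := le_max_left (2*α+2-β) 1
          nlinarith
  -- M / a computation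
  have hMa : M / (ν * lam n ^ 2) = (K/ν) * (2:ℝ) ^ ((n:ℝ) * (β - 2*α - 2)) := by
    rw [hM, lam_sq hn, show (n:ℝ) * (β - 2*α - 2) = (n:ℝ) * (β - 2*α) - (n:ℝ) * 2 by ring,
      Real.rpow_sub two_pos]
    field_simp
    try ring
  rw [hMa] at hode
  calc |X n t| ≤ |X n 0| + (K/ν) * (2:ℝ) ^ ((n:ℝ) * (β - 2*α - 2)) := hode
    _ ≤ max C₀ 0 * (2:ℝ) ^ ((n:ℝ) * (β - 2*α - 2))
        + (K/ν) * (2:ℝ) ^ ((n:ℝ) * (β - 2*α - 2)) := by linarith [hX0n]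
    _ = (max C₀ 0 + K / ν) * (2:ℝ) ^ ((n:ℝ) * (-(2*α+2-β))) := by
        rw [show (n:ℝ) * (-(2*α+2-β)) = (n:ℝ) * (β - 2*α - 2) by ring]; try ring

end AuxiliaryDyadic

/-- if `X(0) ∈ 𝒟^∞` and for some `ε > 0` one has
`sup_{n≥1} sup_{t∈[0,T]} λ_n^{β-2+ε} |X_n(t)| < ∞`, then `X(t) ∈ 𝒟^∞` for
all `t ∈ [0,T]`. -/
theorem viscous_regularity_criterion_eps
    (β ν T ε : ℝ) (hβ : 0 < β) (hν : 0 < ν) (hT : 0 < T) (hε : 0 < ε)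
    (X : ℕ → ℝ → ℝ) (hX : IsViscousSolution β ν (Set.Icc 0 T) X)
    (hX0 : ∀ γ : ℝ, 0 < γ → ∃ C : ℝ, ∀ n, 1 ≤ n → lam n ^ γ * |X n 0| ≤ C)
    (hbd : ∃ C : ℝ, ∀ n, 1 ≤ n → ∀ t ∈ Set.Icc (0 : ℝ) T,
      lam n ^ (β - 2 + ε) * |X n t| ≤ C) :
    ∀ t ∈ Set.Icc (0 : ℝ) T, ∀ γ : ℝ, 0 < γ →
      ∃ C : ℝ, ∀ n, 1 ≤ n → lam n ^ γ * |X n t| ≤ C := by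
  -- decay of order `β - 2 + 2^k * ε` for every `k`
  have hiter : ∀ k : ℕ, ∃ C : ℝ, 0 ≤ C ∧ ∀ n, 1 ≤ n → ∀ t ∈ Set.Icc (0:ℝ) T,
      |X n t| ≤ C * (2:ℝ) ^ ((n:ℝ) * (-(β - 2 + 2^k * ε))) := by
    intro k
    induction k with
    | zero =>
      obtain ⟨C, hC⟩ := hbd
      refine ⟨max C 0, le_max_right _ _, ?_⟩
      intro n hn t ht
      have h1 := hC n hn t ht
      rw [lam_rpow hn] at h1
      have hp : (0:ℝ) < (2:ℝ) ^ ((n:ℝ) * (β - 2 + ε)) := by positivity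
      have h2 : |X n t| ≤ max C 0 * (2:ℝ) ^ ((n:ℝ) * (-(β - 2 + ε))) := by
        rw [mul_neg, Real.rpow_neg (by norm_num), ← div_eq_mul_inv, le_div_iff₀ hp]
        have := le_max_left C 0
        linarith
      simpa using h2
    | succ k ih =>
      obtain ⟨C, hC0, hC⟩ := ih
      obtain ⟨C', hC'0, hC'⟩ := bootstrap β ν T hβ hν X hX hX0 (β - 2 + 2^k * ε) C hC0 hC
      refine ⟨C', hC'0, ?_⟩
      have heq : 2 * (β - 2 + 2^k * ε) + 2 - β = β - 2 + 2^(k+1) * ε := by ring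
      rw [heq] at hC'
      exact hC'
  intro t ht γ hγ
  -- choose `k` with `γ ≤ β - 2 + 2^k * ε`
  obtain ⟨k, hk⟩ := pow_unbounded_of_one_lt ((γ - (β - 2)) / ε) (one_lt_two (α := ℝ))
  have hγk : γ ≤ β - 2 + 2^k * ε := by
    rw [div_lt_iff₀ hε] at hk
    nlinarith
  obtain ⟨C, hC0, hC⟩ := hiter k
  refine ⟨C, ?_⟩
  intro n hn
  have h1 := hC n hn t ht
  have hp : (0:ℝ) < (2:ℝ) ^ ((n:ℝ) * (-(β - 2 + 2^k * ε))) := by positivity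
  calc lam n ^ γ * |X n t|
      ≤ (2:ℝ) ^ ((n:ℝ) * γ) * (C * (2:ℝ) ^ ((n:ℝ) * (-(β - 2 + 2^k * ε)))) := by
        rw [lam_rpow hn]
        exact mul_le_mul_of_nonneg_left h1 (by positivity)
    _ = C * (2:ℝ) ^ ((n:ℝ) * γ + (n:ℝ) * (-(β - 2 + 2^k * ε))) := by
        rw [Real.rpow_add two_pos]; ring
    _ ≤ C * 1 := by
        apply mul_le_mul_of_nonneg_left _ hC0
        apply Real.rpow_le_one_of_one_le_of_nonpos one_le_two
        have hn0 : (0:ℝ) ≤ (n:ℝ) := Nat.cast_nonneg n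
        nlinarith
    _ = C := mul_one C
end

section
/- Let δ = 1/10, θ = 3/5, m = 3/4, λ = 2, and define ψ₂(x) = λ [ x² - θ ((x-δ)/(1-δ))^{λ²} ] - m ((x-δ)/(1-δ))^{2λ²} - (1/(1-δ)) ((x-δ)/(1-δ))^{λ²-1} [ 1 - x ((x-δ)/(1-δ))^{λ²} ], i.e. ψ₂(x) = 2[x² - (3/5)((x-1/10)/(9/10))⁴] - (3/4)((x-1/10)/(9/10))⁸ - (10/9)((x-1/10)/(9/10))³[1 - x((x-1/10)/(9/10))⁴]. Then ψ₂(x) > 0 for every x ∈ [δ, 1]. -/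
lemma psi2_aux (x t : ℝ) (hx0 : 1/10 ≤ x) (hx1 : x ≤ 1)
    (ht0 : 0 ≤ t) (ht1 : t ≤ 1) (htx : t ≤ x) :
    0 < 2*x^2 - (6/5)*t^4 - (3/4)*t^8 - (10/9)*t^3*(1 - x*t^4) := by
  have h5 : t^5 ≤ x * t^4 := by
    nlinarith [mul_nonneg (pow_nonneg ht0 4) (sub_nonneg.2 htx)]
  have step1 : (10/9)*t^3*(1 - x*t^4) ≤ (10/9)*t^3*(1 - t^5) := by
    have h3 : (0:ℝ) ≤ (10/9)*t^3 := by positivity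
    have h : 1 - x*t^4 ≤ 1 - t^5 := by linarith
    exact mul_le_mul_of_nonneg_left h h3
  have ht2 : t^2 ≤ x^2 := by nlinarith
  have key : 0 < 2*x^2 - (6/5)*t^4 - (10/9)*t^3 + (13/36)*t^8 := by
    have e1 : t^3 ≤ t * x^2 := by nlinarith [mul_nonneg ht0 (sub_nonneg.2 ht2)]
    have e2 : t^4 ≤ t^2 * x^2 := by
      nlinarith [mul_nonneg (mul_nonneg ht0 ht0) (sub_nonneg.2 ht2)]
    have e8 : (0:ℝ) ≤ t^8 := by positivity
    have hx2 : (1:ℝ)/100 ≤ x^2 := by nlinarith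
    rcases le_or_gt t (17/20) with hc | hc
    · have hcoef : (0:ℝ) ≤ 2 - 10/9*t - 6/5*t^2 - 1/10 := by
        nlinarith [mul_nonneg ht0 (sub_nonneg.2 hc)]
      nlinarith [mul_nonneg hcoef (sq_nonneg x)]
    · have hq : 0 < 2*t^2 - (6/5)*t^4 - (10/9)*t^3 + (13/36)*t^8 := by
        nlinarith [mul_nonneg (sub_nonneg.2 ht1) (by linarith : (0:ℝ) ≤ t - 17/20),
          mul_nonneg (mul_nonneg ht0 (sub_nonneg.2 ht1)) (by linarith : (0:ℝ) ≤ t - 17/20),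
          mul_nonneg (mul_nonneg (mul_nonneg ht0 ht0) (sub_nonneg.2 ht1)) (by linarith : (0:ℝ) ≤ t - 17/20),
          mul_nonneg (pow_nonneg ht0 3) (sq_nonneg (1 - t)),
          mul_nonneg (pow_nonneg ht0 4) (sq_nonneg (1 - t)),
          mul_nonneg (pow_nonneg ht0 5) (sq_nonneg (1 - t)),
          mul_nonneg (pow_nonneg ht0 6) (sq_nonneg (1 - t)),
          sq_nonneg (1 - t)]
      nlinarith [ht2]
  linarith

/-- the function `ψ₂` built from the parameters `δ = 1/10`,
`θ = 3/5`, `m = 3/4`, `l = λ = 2` (so `λ² = 4`, `2λ² = 8`, `λ² - 1 = 3`) is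
positive on `[δ, 1]`. -/
theorem psi2_pos (δ θ m l : ℝ) (hδ : δ = 1 / 10) (hθ : θ = 3 / 5)
    (hm : m = 3 / 4) (hl : l = 2)
    (x : ℝ) (hx0 : δ ≤ x) (hx1 : x ≤ 1) :
    0 < l * (x ^ 2 - θ * ((x - δ) / (1 - δ)) ^ 4)
        - m * ((x - δ) / (1 - δ)) ^ 8
        - (1 / (1 - δ)) * ((x - δ) / (1 - δ)) ^ 3
            * (1 - x * ((x - δ) / (1 - δ)) ^ 4) := by
  subst hδ hθ hm hl
  have ht0 : (0:ℝ) ≤ (x - 1/10) / (1 - 1/10) := by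
    apply div_nonneg <;> linarith
  have ht1 : (x - 1/10) / (1 - 1/10) ≤ 1 := by
    rw [div_le_one (by norm_num)]; linarith
  have htx : (x - 1/10) / (1 - 1/10) ≤ x := by
    rw [div_le_iff₀ (by norm_num)]; linarith
  have := psi2_aux x ((x - 1/10) / (1 - 1/10)) hx0 hx1 ht0 ht1 htx
  nlinarith [this]
end

section
/- Let 0 < u < 1/3 and set A = (1 - √((1-3u)/(1+u)))/(2u) and B = (1 + √((1-3u)/(1+u)))/(2u). If a, b ∈ [A, B] and c satisfies b c = b + u a² (i.e. c = 1 + u a²/b), then c ∈ [A, B]. -/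
/-- invariance of the interval `[A, B]` for the recursion
`a_n a_{n+1} = a_n + u a_{n-1}²` arising from stationary solutions of the
viscous dyadic model. -/
theorem interval_invariance (u : ℝ) (hu0 : 0 < u) (hu : u < 1 / 3)
    (A B : ℝ)
    (hA : A = (1 - Real.sqrt ((1 - 3 * u) / (1 + u))) / (2 * u))
    (hB : B = (1 + Real.sqrt ((1 - 3 * u) / (1 + u))) / (2 * u))
    (a b c : ℝ) (ha : a ∈ Set.Icc A B) (hb : b ∈ Set.Icc A B)
    (hc : b * c = b + u * a ^ 2) :
    c ∈ Set.Icc A B := by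
  set s := Real.sqrt ((1 - 3 * u) / (1 + u)) with hs
  have hu1 : (0:ℝ) < 1 + u := by linarith
  have harg : (0:ℝ) ≤ (1 - 3 * u) / (1 + u) := by
    apply div_nonneg <;> linarith
  have hs0 : 0 ≤ s := Real.sqrt_nonneg _
  have hs2 : s ^ 2 * (1 + u) = 1 - 3 * u := by
    rw [hs, Real.sq_sqrt harg]
    field_simp
  have hsle : s ≤ 1 - 2 * u := by
    have h1 : (1 - 3 * u) / (1 + u) ≤ (1 - 2 * u) ^ 2 := by
      rw [div_le_iff₀ hu1]
      nlinarith [mul_pos hu0 (mul_pos hu0 hu0)]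
    calc s ≤ Real.sqrt ((1 - 2 * u) ^ 2) := Real.sqrt_le_sqrt h1
      _ = 1 - 2 * u := Real.sqrt_sq (by linarith)
  have hA1 : 1 ≤ A := by
    rw [hA]
    rw [le_div_iff₀ (by linarith : (0:ℝ) < 2 * u)]
    linarith
  have hB1 : 1 ≤ B := by
    rw [hB]
    rw [le_div_iff₀ (by linarith : (0:ℝ) < 2 * u)]
    linarith
  have key1 : u * A ^ 2 - B * (A - 1) = 0 := by
    rw [hA, hB]
    field_simp
    nlinarith [hs2, mul_pos hu0 (mul_pos hu0 hu0), mul_pos hu0 hu0]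
  have key2 : B * A - A - u * B ^ 2 = 0 := by
    rw [hA, hB]
    field_simp
    nlinarith [hs2, mul_pos hu0 (mul_pos hu0 hu0), mul_pos hu0 hu0]
  have hb0 : (0:ℝ) < b := lt_of_lt_of_le one_pos (le_trans hA1 hb.1)
  have hA0 : (0:ℝ) < A := lt_of_lt_of_le one_pos hA1
  constructor
  · have h1 : b * A ≤ b * c := by
      nlinarith [mul_nonneg (sub_nonneg.2 hb.2) (sub_nonneg.2 hA1),
        mul_nonneg (mul_nonneg hu0.le (sub_nonneg.2 ha.1)) (by linarith [ha.1] : (0:ℝ) ≤ a + A)]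
    exact le_of_mul_le_mul_left h1 hb0
  · have h2 : b * c ≤ b * B := by
      nlinarith [mul_nonneg (sub_nonneg.2 hb.1) (sub_nonneg.2 hB1),
        mul_nonneg (mul_nonneg hu0.le (sub_nonneg.2 ha.2)) (by linarith [ha.1] : (0:ℝ) ≤ B + a)]
    exact le_of_mul_le_mul_left h2 hb0
end
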